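/- arXiv:math-ph/0406014 — 4 statements merged into one kernel-verified Lean document; each statement's English description precedes it below -/
import Mathlib

section
/- The function x ↦ 1 + x⁴ − x²·√(x⁴+2) is nonnegative on [0,∞) and is integrable on (0,∞) with respect to Lebesgue measure. -/
/-!
Writing `t = x²` and `s = √(t² + 2)`, the conjugate `1 + t² + t s` satisfies
`(1 + t² - t s)(1 + t² + t s) = (1 + t²)² - t²(t² + 2) = 1`, so the integrand equals
`(1 + t² + t s)⁻¹`. This is positive and at most `(1 + x⁴)⁻¹ ≤ 2 (1 + x²)⁻¹`, which is integrable.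
-/

open MeasureTheory

theorem one_add_sq_sub_mul_sqrt_mul_conj (t : ℝ) :
    (1 + t ^ 2 - t * √(t ^ 2 + 2)) * (1 + t ^ 2 + t * √(t ^ 2 + 2)) = 1 := by
  have hs : √(t ^ 2 + 2) ^ 2 = t ^ 2 + 2 := Real.sq_sqrt (by positivity)
  linear_combination (-t ^ 2) * hs

theorem one_add_sq_sub_mul_sqrt_eq_inv (t : ℝ) :
    1 + t ^ 2 - t * √(t ^ 2 + 2) = (1 + t ^ 2 + t * √(t ^ 2 + 2))⁻¹ :=
  eq_inv_of_mul_eq_one_left (one_add_sq_sub_mul_sqrt_mul_conj t)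

theorem one_add_sq_sub_mul_sqrt_nonneg {t : ℝ} (ht : 0 ≤ t) :
    0 ≤ 1 + t ^ 2 - t * √(t ^ 2 + 2) := by
  rw [one_add_sq_sub_mul_sqrt_eq_inv]
  positivity

theorem one_add_sq_sub_mul_sqrt_le_inv {t : ℝ} (ht : 0 ≤ t) :
    1 + t ^ 2 - t * √(t ^ 2 + 2) ≤ (1 + t ^ 2)⁻¹ := by
  rw [one_add_sq_sub_mul_sqrt_eq_inv]
  exact inv_anti₀ (by positivity) (le_add_of_nonneg_right (by positivity))

theorem inv_one_add_pow_four_le (x : ℝ) : (1 + x ^ 4)⁻¹ ≤ 2 * (1 + x ^ 2)⁻¹ := by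
  rw [le_mul_inv_iff₀ (by positivity), inv_mul_le_iff₀ (by positivity)]
  nlinarith [sq_nonneg (x ^ 2 - 1)]

/-- The function `x ↦ 1 + x⁴ − x²√(x⁴+2)` is nonnegative on `[0,∞)` and integrable
    on `(0,∞)`. -/
theorem foldy_integrand_nonneg_integrable :
    (∀ x : ℝ, 0 ≤ x → 0 ≤ 1 + x ^ 4 - x ^ 2 * Real.sqrt (x ^ 4 + 2)) ∧
    IntegrableOn (fun x : ℝ => 1 + x ^ 4 - x ^ 2 * Real.sqrt (x ^ 4 + 2))
      (Set.Ioi 0) volume := by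
  have hsubst (x : ℝ) : x ^ 4 = (x ^ 2) ^ 2 := by ring
  have hnonneg (x : ℝ) : 0 ≤ 1 + x ^ 4 - x ^ 2 * √(x ^ 4 + 2) := by
    simpa only [hsubst] using one_add_sq_sub_mul_sqrt_nonneg (sq_nonneg x)
  refine ⟨fun x _ => hnonneg x, Integrable.integrableOn ?_⟩
  refine (integrable_inv_one_add_sq.const_mul 2).mono' (by fun_prop) (ae_of_all _ fun x => ?_)
  calc ‖1 + x ^ 4 - x ^ 2 * √(x ^ 4 + 2)‖ = 1 + x ^ 4 - x ^ 2 * √(x ^ 4 + 2) :=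
        Real.norm_of_nonneg (hnonneg x)
    _ ≤ (1 + x ^ 4)⁻¹ := by
        simpa only [hsubst] using one_add_sq_sub_mul_sqrt_le_inv (sq_nonneg x)
    _ ≤ 2 * (1 + x ^ 2)⁻¹ := inv_one_add_pow_four_le x
end

section
/- The function ξ(t) = √(t(t+1)) is operator concave on [0,∞): for all positive semidefinite operators A, B on a Hilbert space (or positive semidefinite matrices) and all λ ∈ [0,1], ξ(λA + (1−λ)B) ≥ λ·ξ(A) + (1−λ)·ξ(B) in the Loewner order. -/
/-!
`ξ(a) = √(a (a + 1))` is the geometric mean of the commuting pair `a, a + 1`. For positive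
invertible `p, q`, the map `(x, p) ↦ x⋆ p⁻¹ x` is jointly convex; taking `x = α ξ(a)`,
`p = α (a + 1)` (for which `x⋆ p⁻¹ x = α a`) and likewise for `b` with weight `β = 1 - α`, one gets
`z (c + 1)⁻¹ z ≤ c` for `z = α ξ(a) + β ξ(b)` and `c = α a + β b`. Conjugating by `(c + 1)^{-1/2}`
turns this into `w² ≤ c (c + 1)⁻¹` for `w = (c + 1)^{-1/2} z (c + 1)^{-1/2}`, and operator
monotonicity of the square root gives `w ≤ √(c (c + 1)⁻¹)`, i.e. `z ≤ ξ(c)`.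
-/

section Ring

variable {R : Type*} [Ring R]

theorem Units.mul_inv_mul_comm {p q s : Rˣ} (hs : (s : R) = p + q) :
    (p * ↑s⁻¹ * q : R) = q * ↑s⁻¹ * p := by
  have hp : (p : R) = s - q := by rw [hs, add_sub_cancel_right]
  rw [hp, sub_mul, sub_mul, mul_sub, Units.mul_inv, one_mul, Units.inv_mul_cancel_right]

variable [StarRing R]

theorem IsSelfAdjoint.val_inv {u : Rˣ} (hu : IsSelfAdjoint (u : R)) :
    IsSelfAdjoint (↑u⁻¹ : R) := by
  have : star u = u := Units.ext hu.star_eq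
  rw [IsSelfAdjoint, ← Units.coe_star_inv, this]

variable [PartialOrder R] [StarOrderedRing R]

theorem Units.inv_nonneg_of_nonneg {u : Rˣ} (hu : 0 ≤ (u : R)) : 0 ≤ (↑u⁻¹ : R) := by
  have h := (IsSelfAdjoint.of_nonneg hu).val_inv
  simpa only [h.star_eq, Units.inv_mul, one_mul] using star_left_conjugate_nonneg hu ↑u⁻¹

theorem Units.mul_inv_mul_nonneg {p q s : Rˣ} (hp : 0 ≤ (p : R)) (hq : 0 ≤ (q : R))
    (hs : (s : R) = p + q) : 0 ≤ (p * ↑s⁻¹ * q : R) := by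
  have hs_sa : IsSelfAdjoint (s : R) := hs ▸ (IsSelfAdjoint.of_nonneg hp).add (.of_nonneg hq)
  have h_sa : star (p * ↑s⁻¹ * q : R) = p * ↑s⁻¹ * q := by
    rw [star_mul, star_mul, (IsSelfAdjoint.of_nonneg hp).star_eq,
      (IsSelfAdjoint.of_nonneg hq).star_eq, hs_sa.val_inv.star_eq, ← mul_assoc,
      Units.mul_inv_mul_comm hs]
  have h_inv : (p * ↑s⁻¹ * q : R) * (↑p⁻¹ + ↑q⁻¹) = 1 := by
    rw [mul_add]
    nth_rewrite 1 [Units.mul_inv_mul_comm hs]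
    rw [Units.mul_inv_cancel_right, Units.mul_inv_cancel_right, add_comm, ← add_mul, ← hs,
      Units.mul_inv]
  have h_conj : (p * ↑s⁻¹ * q : R) =
      star (p * ↑s⁻¹ * q : R) * (↑p⁻¹ + ↑q⁻¹) * (p * ↑s⁻¹ * q) := by
    rw [h_sa, h_inv, one_mul]
  rw [h_conj]
  exact star_left_conjugate_nonneg
    (add_nonneg (Units.inv_nonneg_of_nonneg hp) (Units.inv_nonneg_of_nonneg hq)) _

/-- The defect of joint convexity is `w⋆ K w` for `w = p⁻¹ x - q⁻¹ y` and the parallel sum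
`K = p (p + q)⁻¹ q`. -/
theorem star_add_mul_inv_mul_add_le {p q s : Rˣ} (hp : 0 ≤ (p : R)) (hq : 0 ≤ (q : R))
    (hs : (s : R) = p + q) (x y : R) :
    star (x + y) * ↑s⁻¹ * (x + y) ≤ star x * ↑p⁻¹ * x + star y * ↑q⁻¹ * y := by
  have hpKp : (↑p⁻¹ * (p * ↑s⁻¹ * q) * ↑p⁻¹ : R) = ↑p⁻¹ - ↑s⁻¹ := by
    rw [show (q : R) = s - p by rw [hs, add_sub_cancel_left]]
    simp only [mul_sub, sub_mul, mul_assoc, Units.inv_mul_cancel_left, Units.mul_inv, mul_one]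
  have hpKq : (↑p⁻¹ * (p * ↑s⁻¹ * q) * ↑q⁻¹ : R) = ↑s⁻¹ := by
    simp only [mul_assoc, Units.inv_mul_cancel_left, Units.mul_inv, mul_one]
  have hqKp : (↑q⁻¹ * (p * ↑s⁻¹ * q) * ↑p⁻¹ : R) = ↑s⁻¹ := by
    simp only [Units.mul_inv_mul_comm hs, mul_assoc, Units.inv_mul_cancel_left, Units.mul_inv,
      mul_one]
  have hqKq : (↑q⁻¹ * (p * ↑s⁻¹ * q) * ↑q⁻¹ : R) = ↑q⁻¹ - ↑s⁻¹ := by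
    rw [Units.mul_inv_mul_comm hs, show (p : R) = s - q by rw [hs, add_sub_cancel_right]]
    simp only [mul_sub, sub_mul, mul_assoc, Units.inv_mul_cancel_left, Units.mul_inv, mul_one]
  have hw : star (↑p⁻¹ * x - ↑q⁻¹ * y) = star x * ↑p⁻¹ - star y * ↑q⁻¹ := by
    rw [star_sub, star_mul, star_mul, (IsSelfAdjoint.of_nonneg hp).val_inv.star_eq,
      (IsSelfAdjoint.of_nonneg hq).val_inv.star_eq]
  have key : star (↑p⁻¹ * x - ↑q⁻¹ * y) * (p * ↑s⁻¹ * q) * (↑p⁻¹ * x - ↑q⁻¹ * y) =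
      star x * ↑p⁻¹ * x + star y * ↑q⁻¹ * y - star (x + y) * ↑s⁻¹ * (x + y) := by
    calc _ = star x * (↑p⁻¹ * (p * ↑s⁻¹ * q) * ↑p⁻¹) * x
          - star x * (↑p⁻¹ * (p * ↑s⁻¹ * q) * ↑q⁻¹) * y
          - star y * (↑q⁻¹ * (p * ↑s⁻¹ * q) * ↑p⁻¹) * x
          + star y * (↑q⁻¹ * (p * ↑s⁻¹ * q) * ↑q⁻¹) * y := by rw [hw]; noncomm_ring
      _ = _ := by rw [hpKp, hpKq, hqKp, hqKq, star_add]; noncomm_ring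
  rw [← sub_nonneg, ← key]
  exact star_left_conjugate_nonneg (Units.mul_inv_mul_nonneg hp hq hs) _

end Ring

namespace CFC

theorem le_of_mul_self_le_mul_self {A : Type*} [NonUnitalCStarAlgebra A] [PartialOrder A]
    [StarOrderedRing A] {a b : A} (ha : 0 ≤ a) (hb : 0 ≤ b) (h : a * a ≤ b * b) : a ≤ b := by
  simpa only [sqrt_mul_self a ha, sqrt_mul_self b hb] using sqrt_le_sqrt _ _ h

variable {A : Type*} [CStarAlgebra A] [PartialOrder A] [StarOrderedRing A]

theorem le_mul_of_mul_inv_mul_le {z s : A} {r : Aˣ} (hz : 0 ≤ z) (hs : 0 ≤ s) (hr : 0 ≤ (r : A))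
    (hsr : Commute s r) (h : z * ↑(r * r)⁻¹ * z ≤ s * s) : z ≤ s * r := by
  have he : 0 ≤ (↑r⁻¹ : A) := Units.inv_nonneg_of_nonneg hr
  have hse : Commute s ↑r⁻¹ := hsr.units_inv_right
  have hw : ↑r⁻¹ * z * ↑r⁻¹ ≤ s * ↑r⁻¹ := by
    refine le_of_mul_self_le_mul_self (conjugate_nonneg_of_nonneg hz he)
      (hse.mul_nonneg hs he) ?_
    calc ↑r⁻¹ * z * ↑r⁻¹ * (↑r⁻¹ * z * ↑r⁻¹) = ↑r⁻¹ * (z * ↑(r * r)⁻¹ * z) * ↑r⁻¹ := by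
          simp only [mul_inv_rev, Units.val_mul, mul_assoc]
      _ ≤ ↑r⁻¹ * (s * s) * ↑r⁻¹ := conjugate_le_conjugate_of_nonneg h he
      _ = s * ↑r⁻¹ * (s * ↑r⁻¹) := by rw [← mul_assoc, ← hse.eq, mul_assoc, mul_assoc]
  calc z = r * (↑r⁻¹ * z * ↑r⁻¹) * r := by simp [mul_assoc]
    _ ≤ r * (s * ↑r⁻¹) * r := conjugate_le_conjugate_of_nonneg hw hr
    _ = s * r := by rw [← mul_assoc, ← hsr.eq]; simp [mul_assoc]

theorem star_smul_cfc_mul_inv_mul {a : A} (ha : 0 ≤ a) {α : ℝ} {p : Aˣ}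
    (hp : (p : A) = α • (a + 1)) :
    star (α • cfc (fun t : ℝ => √(t * (t + 1))) a) * ↑p⁻¹ *
      (α • cfc (fun t : ℝ => √(t * (t + 1))) a) = α • a := by
  set v := cfc (fun t : ℝ => √(t * (t + 1))) a
  have hvv : v * v = a * (a + 1) := by
    have hξ : Set.EqOn (fun t : ℝ => √(t * (t + 1)) * √(t * (t + 1))) (fun t => t * (t + 1))
        (spectrum ℝ a) := fun t ht =>
      Real.mul_self_sqrt (by have := spectrum_nonneg_of_nonneg ha ht; positivity)
    rw [← cfc_mul .., cfc_congr hξ, cfc_mul (fun t : ℝ => t) (fun t => t + 1) a,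
      cfc_add_const .., cfc_id' ℝ a, map_one]
  have hvp : Commute v ↑p⁻¹ := by
    refine Commute.units_inv_right ?_
    rw [hp]
    exact (((Commute.refl a).add_right (Commute.one_right a)).smul_right α).cfc_real _
  have hv_sa : IsSelfAdjoint v := cfc_predicate _ _
  calc star (α • v) * ↑p⁻¹ * (α • v) = (α • v) * (α • v) * ↑p⁻¹ := by
        rw [star_smul, star_trivial, hv_sa.star_eq, mul_assoc, ← (hvp.smul_left α).eq, mul_assoc]
    _ = (α • a) * p * ↑p⁻¹ := by rw [smul_mul_smul_comm, hvv, hp, smul_mul_smul_comm]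
    _ = α • a := Units.mul_inv_cancel_right _ _

theorem le_cfc_sqrt_mul_add_one {c z : A} (hc : 0 ≤ c) (hz : 0 ≤ z) {S : Aˣ}
    (hS : (S : A) = c + 1) (h : z * ↑S⁻¹ * z ≤ c) :
    z ≤ cfc (fun t : ℝ => √(t * (t + 1))) c := by
  have hspec : ∀ t ∈ spectrum ℝ c, 0 ≤ t := fun t ht => spectrum_nonneg_of_nonneg hc ht
  obtain ⟨r, hr⟩ : ∃ r : Aˣ, (r : A) = cfc (fun t : ℝ => √(t + 1)) c :=
    ⟨cfcUnits _ c fun t ht => (Real.sqrt_pos.2 (by linarith [hspec t ht])).ne', rfl⟩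
  have hrr : r * r = S := by
    refine Units.ext ?_
    rw [Units.val_mul, hS, hr, ← cfc_mul ..,
      cfc_congr (g := fun t => t + 1) fun t ht => Real.mul_self_sqrt (by linarith [hspec t ht]),
      cfc_add_const .., cfc_id' ℝ c, map_one]
  have hss : cfc Real.sqrt c * cfc Real.sqrt c = c :=
    (cfc_mul ..).symm.trans <|
      (cfc_congr fun t ht => Real.mul_self_sqrt (hspec t ht)).trans (cfc_id' ℝ c)
  have hsr : cfc Real.sqrt c * r = cfc (fun t : ℝ => √(t * (t + 1))) c := by
    rw [hr, ← cfc_mul ..]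
    exact cfc_congr fun t ht => (Real.sqrt_mul (hspec t ht) _).symm
  rw [← hsr]
  refine le_mul_of_mul_inv_mul_le hz (cfc_nonneg fun _ _ => Real.sqrt_nonneg _)
    (hr ▸ cfc_nonneg fun _ _ => Real.sqrt_nonneg _) (hr ▸ cfc_commute_cfc _ _ c) ?_
  rwa [hrr, hss]

theorem concaveOn_cfc_sqrt_mul_add_one :
    ConcaveOn ℝ (Set.Ici (0 : A)) (cfc fun t : ℝ => √(t * (t + 1))) := by
  refine concaveOn_iff_forall_pos.2 ⟨convex_Ici 0, fun a ha b hb α β hα hβ hαβ => ?_⟩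
  rw [Set.mem_Ici] at ha hb
  have hpa := (IsStrictlyPositive.nonneg_add ha isStrictlyPositive_one).smul hα
  have hqb := (IsStrictlyPositive.nonneg_add hb isStrictlyPositive_one).smul hβ
  obtain ⟨p, hp⟩ := hpa.isUnit
  obtain ⟨q, hq⟩ := hqb.isUnit
  have hc : 0 ≤ α • a + β • b := add_nonneg (smul_nonneg hα.le ha) (smul_nonneg hβ.le hb)
  obtain ⟨S, hS⟩ := (IsStrictlyPositive.nonneg_add hc isStrictlyPositive_one).isUnit
  have hpq : (S : A) = p + q := by
    rw [hS, hp, hq, smul_add, smul_add, add_add_add_comm, ← add_smul, hαβ, one_smul]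
  have hz : 0 ≤ α • cfc (fun t : ℝ => √(t * (t + 1))) a +
      β • cfc (fun t : ℝ => √(t * (t + 1))) b :=
    add_nonneg (smul_nonneg hα.le (cfc_nonneg fun _ _ => Real.sqrt_nonneg _))
      (smul_nonneg hβ.le (cfc_nonneg fun _ _ => Real.sqrt_nonneg _))
  have key := star_add_mul_inv_mul_add_le (hp ▸ hpa.nonneg) (hq ▸ hqb.nonneg) hpq
    (α • cfc (fun t : ℝ => √(t * (t + 1))) a) (β • cfc (fun t : ℝ => √(t * (t + 1))) b)
  rw [star_smul_cfc_mul_inv_mul ha hp, star_smul_cfc_mul_inv_mul hb hq,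
    (IsSelfAdjoint.of_nonneg hz).star_eq] at key
  exact le_cfc_sqrt_mul_add_one hc hz hS key

end CFC

open scoped ComplexOrder

/-- The function `ξ(t) = √(t(t+1))` is operator concave on positive semidefinite
matrices: for PSD matrices `A, B` and `l ∈ [0,1]`,
`ξ(l•A + (1−l)•B) ≥ l•ξ(A) + (1−l)•ξ(B)` in the Loewner order, where `ξ` is
applied via the continuous functional calculus. -/
theorem sqrt_t_mul_t_add_one_operatorConcave
    (n : ℕ) (A B : Matrix (Fin n) (Fin n) ℂ)
    (hA : A.PosSemidef) (hB : B.PosSemidef) (l : ℝ) (hl0 : 0 ≤ l) (hl1 : l ≤ 1) :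
    (cfc (fun t : ℝ => Real.sqrt (t * (t + 1))) (l • A + (1 - l) • B) -
      (l • cfc (fun t : ℝ => Real.sqrt (t * (t + 1))) A +
        (1 - l) • cfc (fun t : ℝ => Real.sqrt (t * (t + 1))) B)).PosSemidef := by
  open scoped MatrixOrder Matrix.Norms.L2Operator in
  exact Matrix.le_iff.1 <| CFC.concaveOn_cfc_sqrt_mul_add_one.2 hA.nonneg hB.nonneg hl0
    (sub_nonneg.2 hl1) (add_sub_cancel l 1)
end

section
/- If U : H → K is a linear contraction between Hilbert spaces (‖U‖ ≤ 1), B a bounded positive semidefinite self-adjoint operator on K, and ξ : [0,∞) → ℝ operator concave with ξ(0) ≥ 0, then ξ(U*BU) ≥ U*ξ(B)U in the Loewner order. -/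
/-!
Let `𝒰 = [[√(1 - U*U), -U*], [U, √(1 - UU*)]]` be the Halmos unitary dilation of the
contraction `U` and `R = diag(1, -1)`, so that the paper's second dilation is `𝒱 = 𝒰 R`.
For `A = 𝒰* diag(0, B) 𝒰` the midpoint of `A` and `R A R` is block diagonal with corner `U*BU`,
while the corner of `ξ(A) = 𝒰* diag(ξ(0), ξ(B)) 𝒰` (and of `R ξ(A) R`) is
`ξ(0) (1 - U*U) + U* ξ(B) U`. Midpoint concavity of `ξ` therefore gives
`ξ(U*BU) ≥ ξ(0) (1 - U*U) + U* ξ(B) U ≥ U* ξ(B) U`.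

On matrices `f(A)` is a polynomial in `A`, so `B X = X A` implies `f(B) X = X f(A)`; this one fact
gives unitary covariance of `ξ`, its action on block-diagonal matrices, and
`√(1 - UU*) U = U √(1 - U*U)`, which makes `𝒰` unitary.
-/

open Matrix Polynomial
open scoped ComplexOrder MatrixOrder

theorem Polynomial.exists_eqOn_eval {F : Type*} [Field F] [DecidableEq F] {s : Set F}
    (hs : s.Finite) (f : F → F) : ∃ p : F[X], s.EqOn f p.eval :=
  ⟨Lagrange.interpolate hs.toFinset id f, fun _ hx =>
    (Lagrange.eval_interpolate_at_node f (Set.injOn_id _) (hs.mem_toFinset.2 hx)).symm⟩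

theorem CStarAlgebra.mul_star_le_one_of_star_mul_le_one {A : Type*} [CStarAlgebra A]
    [PartialOrder A] [StarOrderedRing A] {a : A} (h : star a * a ≤ 1) : a * star a ≤ 1 := by
  rw [← norm_le_one_iff_of_nonneg _ (mul_star_self_nonneg a), CStarRing.norm_self_mul_star,
    ← CStarRing.norm_star_mul_self]
  exact (norm_le_one_iff_of_nonneg _ (star_mul_self_nonneg a)).2 h

namespace Matrix

section FunctionalCalculus

variable {𝕜 : Type*} [RCLike 𝕜] {n m : Type*}

theorem toBlocks₁₁_mono {X Y : Matrix (n ⊕ m) (n ⊕ m) 𝕜} (h : X ≤ Y) :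
    X.toBlocks₁₁ ≤ Y.toBlocks₁₁ :=
  le_iff.mpr ((le_iff.mp h).submatrix Sum.inl)

variable [Fintype n] [DecidableEq n] [Fintype m] [DecidableEq m]

theorem PosSemidef.fromBlocks_zero {A : Matrix n n 𝕜} {D : Matrix m m 𝕜} (hA : A.PosSemidef)
    (hD : D.PosSemidef) : (fromBlocks A 0 0 D).PosSemidef := by
  obtain ⟨X, rfl⟩ := CStarAlgebra.nonneg_iff_eq_star_mul_self.mp hA.nonneg
  obtain ⟨Y, rfl⟩ := CStarAlgebra.nonneg_iff_eq_star_mul_self.mp hD.nonneg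
  simpa [fromBlocks_multiply, fromBlocks_conjTranspose, star_eq_conjTranspose] using
    posSemidef_conjTranspose_mul_self (fromBlocks X 0 0 Y)

theorem aeval_mul_eq_mul_aeval {A : Matrix n n 𝕜} {B : Matrix m m 𝕜} {X : Matrix m n 𝕜}
    (h : B * X = X * A) (p : ℝ[X]) : aeval B p * X = X * aeval A p := by
  induction p using Polynomial.induction_on' with
  | add p q hp hq => simp only [map_add, Matrix.add_mul, Matrix.mul_add, hp, hq]
  | monomial j a =>
    have hpow : B ^ j * X = X * A ^ j := by
      induction j with
      | zero => simp
      | succ j ih => rw [pow_succ, pow_succ, Matrix.mul_assoc, h, ← Matrix.mul_assoc, ih,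
          Matrix.mul_assoc]
    simp only [aeval_monomial, Algebra.algebraMap_eq_smul_one, smul_mul_assoc, one_mul,
      Matrix.smul_mul, Matrix.mul_smul, hpow]

theorem aeval_fromBlocks_zero (A : Matrix n n 𝕜) (D : Matrix m m 𝕜) (p : ℝ[X]) :
    aeval (fromBlocks A 0 0 D) p = fromBlocks (aeval A p) 0 0 (aeval D p) := by
  induction p using Polynomial.induction_on' with
  | add p q hp hq => simp only [map_add, hp, hq, fromBlocks_add, add_zero]
  | monomial j a =>
    have hpow : fromBlocks A 0 0 D ^ j = fromBlocks (A ^ j) 0 0 (D ^ j) := by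
      induction j with
      | zero => simp [fromBlocks_one]
      | succ j ih => simp [pow_succ, ih, fromBlocks_multiply]
    simp only [aeval_monomial, Algebra.algebraMap_eq_smul_one, smul_mul_assoc, one_mul, hpow,
      fromBlocks_smul, smul_zero]

theorem IsHermitian.cfc_eq_aeval {A : Matrix n n 𝕜} (hA : A.IsHermitian) {f : ℝ → ℝ}
    {p : ℝ[X]} {s : Set ℝ} (hp : s.EqOn f p.eval) (hs : spectrum ℝ A ⊆ s) :
    cfc f A = aeval A p :=
  (cfc_congr (hp.mono hs)).trans (cfc_polynomial p A hA.isSelfAdjoint)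

theorem cfc_mul_eq_mul_cfc {A : Matrix n n 𝕜} {B : Matrix m m 𝕜} (hA : A.IsHermitian)
    (hB : B.IsHermitian) {X : Matrix m n 𝕜} (h : B * X = X * A) (f : ℝ → ℝ) :
    cfc f B * X = X * cfc f A := by
  obtain ⟨p, hp⟩ := exists_eqOn_eval (A.finite_real_spectrum.union B.finite_real_spectrum) f
  rw [hB.cfc_eq_aeval hp Set.subset_union_right, hA.cfc_eq_aeval hp Set.subset_union_left]
  exact aeval_mul_eq_mul_aeval h p

theorem cfc_conjTranspose_mul_mul {A W : Matrix n n 𝕜} (hA : A.IsHermitian) (hW : Wᴴ * W = 1)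
    (f : ℝ → ℝ) : cfc f (Wᴴ * A * W) = Wᴴ * cfc f A * W := by
  have hWA : A * W = W * (Wᴴ * A * W) := by
    rw [← Matrix.mul_assoc, ← Matrix.mul_assoc, mul_eq_one_comm.mp hW, Matrix.one_mul]
  rw [Matrix.mul_assoc Wᴴ (cfc f A),
    cfc_mul_eq_mul_cfc (isHermitian_conjTranspose_mul_mul W hA) hA hWA, ← Matrix.mul_assoc, hW,
    Matrix.one_mul]

theorem cfc_submatrix_equiv {A : Matrix n n 𝕜} (hA : A.IsHermitian) (e : m ≃ n) (f : ℝ → ℝ) :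
    cfc f (A.submatrix e e) = (cfc f A).submatrix e e := by
  obtain ⟨p, hp⟩ := exists_eqOn_eval A.finite_real_spectrum f
  have hr : ∀ X : Matrix n n 𝕜, X.submatrix e e = reindexAlgEquiv ℝ 𝕜 e.symm X := fun _ => rfl
  rw [hA.cfc_eq_aeval hp subset_rfl,
    (hA.submatrix e).cfc_eq_aeval hp (by rw [hr, AlgEquiv.spectrum_eq]), hr, hr, aeval_algEquiv]
  rfl

theorem cfc_fromBlocks_zero {A : Matrix n n 𝕜} {D : Matrix m m 𝕜} (hA : A.IsHermitian)
    (hD : D.IsHermitian) (f : ℝ → ℝ) :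
    cfc f (fromBlocks A 0 0 D) = fromBlocks (cfc f A) 0 0 (cfc f D) := by
  have hAD : (fromBlocks A 0 0 D).IsHermitian := hA.fromBlocks (by simp) hD
  obtain ⟨p, hp⟩ := exists_eqOn_eval ((A.finite_real_spectrum.union D.finite_real_spectrum).union
    (fromBlocks A 0 0 D).finite_real_spectrum) f
  rw [hAD.cfc_eq_aeval hp Set.subset_union_right,
    hA.cfc_eq_aeval hp (Set.subset_union_left.trans Set.subset_union_left),
    hD.cfc_eq_aeval hp (Set.subset_union_right.trans Set.subset_union_left),
    aeval_fromBlocks_zero]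

variable (𝕜 n m) in
def blockReflection : Matrix (n ⊕ m) (n ⊕ m) 𝕜 := fromBlocks 1 0 0 (-1)

theorem conjTranspose_blockReflection_mul_self :
    (blockReflection 𝕜 n m)ᴴ * blockReflection 𝕜 n m = 1 := by
  simp [blockReflection, fromBlocks_conjTranspose, fromBlocks_multiply, fromBlocks_one]

theorem smul_add_conjTranspose_blockReflection_mul_mul (Y : Matrix (n ⊕ m) (n ⊕ m) 𝕜) :
    (2⁻¹ : ℝ) • (Y + (blockReflection 𝕜 n m)ᴴ * Y * blockReflection 𝕜 n m) =
      fromBlocks Y.toBlocks₁₁ 0 0 Y.toBlocks₂₂ := by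
  conv_lhs => rw [← fromBlocks_toBlocks Y]
  simp only [blockReflection, fromBlocks_conjTranspose, fromBlocks_multiply, fromBlocks_add,
    fromBlocks_smul]
  congr 1 <;> simp <;> module

variable (𝕜) in
def IsMatrixConcave (ι : Type*) [Fintype ι] [DecidableEq ι] (ξ : ℝ → ℝ) : Prop :=
  ∀ ⦃A B : Matrix ι ι 𝕜⦄, 0 ≤ A → 0 ≤ B → ∀ ⦃l : ℝ⦄, 0 ≤ l → l ≤ 1 →
    l • cfc ξ A + (1 - l) • cfc ξ B ≤ cfc ξ (l • A + (1 - l) • B)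

theorem IsMatrixConcave.of_equiv {ξ : ℝ → ℝ} (e : m ≃ n) (h : IsMatrixConcave 𝕜 n ξ) :
    IsMatrixConcave 𝕜 m ξ := by
  intro A B hA hB l hl0 hl1
  obtain ⟨A, rfl⟩ : ∃ A' : Matrix n n 𝕜, A'.submatrix e e = A :=
    ⟨A.submatrix e.symm e.symm, by simp⟩
  obtain ⟨B, rfl⟩ : ∃ B' : Matrix n n 𝕜, B'.submatrix e e = B :=
    ⟨B.submatrix e.symm e.symm, by simp⟩
  rw [nonneg_iff_posSemidef, posSemidef_submatrix_equiv] at hA hB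
  have hC : (l • A + (1 - l) • B).IsHermitian :=
    ((hA.smul hl0).add (hB.smul (sub_nonneg.mpr hl1))).1
  rw [show l • A.submatrix e e + (1 - l) • B.submatrix e e
      = (l • A + (1 - l) • B).submatrix e e from rfl, cfc_submatrix_equiv hA.1,
    cfc_submatrix_equiv hB.1, cfc_submatrix_equiv hC]
  exact (le_iff.mp (h hA.nonneg hB.nonneg hl0 hl1)).submatrix e

end FunctionalCalculus

section HalmosDilation

variable {n m : Type*} [Fintype n] [DecidableEq n] [Fintype m] [DecidableEq m]

open scoped Matrix.Norms.L2Operator in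
theorem PosSemidef.one_sub_mul_conjTranspose {U : Matrix m n ℂ}
    (hU : (1 - Uᴴ * U).PosSemidef) : (1 - U * Uᴴ).PosSemidef := by
  -- `U` is rectangular: the C⋆-identity `‖V⋆V‖ = ‖VV⋆‖` is applied to the square matrix `V`.
  let V : Matrix (n ⊕ m) (n ⊕ m) ℂ := fromBlocks 0 0 U 0
  have hVV : 1 - star V * V = fromBlocks (1 - Uᴴ * U) 0 0 1 := by
    simp [V, star_eq_conjTranspose, fromBlocks_multiply, fromBlocks_conjTranspose,
      ← fromBlocks_one, sub_eq_add_neg, fromBlocks_neg, fromBlocks_add]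
  have hVV' : 1 - V * star V = fromBlocks 1 0 0 (1 - U * Uᴴ) := by
    simp [V, star_eq_conjTranspose, fromBlocks_multiply, fromBlocks_conjTranspose,
      ← fromBlocks_one, sub_eq_add_neg, fromBlocks_neg, fromBlocks_add]
  have hV : star V * V ≤ 1 := by
    rw [le_iff, hVV]
    exact hU.fromBlocks_zero PosSemidef.one
  have := le_iff.mp (CStarAlgebra.mul_star_le_one_of_star_mul_le_one hV)
  rw [hVV'] at this
  exact this.submatrix (Sum.inr : m → n ⊕ m)

variable (U : Matrix m n ℂ)

noncomputable def halmosDilation : Matrix (n ⊕ m) (n ⊕ m) ℂ :=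
  fromBlocks (CFC.sqrt (1 - Uᴴ * U)) (-Uᴴ) U (CFC.sqrt (1 - U * Uᴴ))

variable {U}

theorem sqrt_one_sub_mul_conjTranspose_mul (hU : (1 - Uᴴ * U).PosSemidef) :
    CFC.sqrt (1 - U * Uᴴ) * U = U * CFC.sqrt (1 - Uᴴ * U) := by
  have hU' := hU.one_sub_mul_conjTranspose
  rw [CFC.sqrt_eq_real_sqrt _ hU.nonneg, CFC.sqrt_eq_real_sqrt _ hU'.nonneg,
    cfcₙ_eq_cfc, cfcₙ_eq_cfc]
  exact cfc_mul_eq_mul_cfc hU.1 hU'.1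
    (by simp only [Matrix.sub_mul, Matrix.mul_sub, Matrix.one_mul, Matrix.mul_one,
      Matrix.mul_assoc]) _

theorem conjTranspose_halmosDilation_mul_self (hU : (1 - Uᴴ * U).PosSemidef) :
    (halmosDilation U)ᴴ * halmosDilation U = 1 := by
  have hS : (CFC.sqrt (1 - Uᴴ * U))ᴴ = CFC.sqrt (1 - Uᴴ * U) :=
    (CFC.sqrt_nonneg _).isSelfAdjoint
  have hT : (CFC.sqrt (1 - U * Uᴴ))ᴴ = CFC.sqrt (1 - U * Uᴴ) :=
    (CFC.sqrt_nonneg _).isSelfAdjoint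
  have hTU := sqrt_one_sub_mul_conjTranspose_mul hU
  have hUT : Uᴴ * CFC.sqrt (1 - U * Uᴴ) = CFC.sqrt (1 - Uᴴ * U) * Uᴴ := by
    simpa [hS, hT] using congrArg conjTranspose hTU
  rw [halmosDilation, fromBlocks_conjTranspose, fromBlocks_multiply, hS, hT,
    CFC.sqrt_mul_sqrt_self _ hU.nonneg,
    CFC.sqrt_mul_sqrt_self _ hU.one_sub_mul_conjTranspose.nonneg, hTU, hUT, ← fromBlocks_one]
  simp

theorem toBlocks₁₁_conjTranspose_halmosDilation_mul_fromBlocks_mul (X : Matrix n n ℂ)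
    (Y : Matrix m m ℂ) :
    ((halmosDilation U)ᴴ * fromBlocks X 0 0 Y * halmosDilation U).toBlocks₁₁ =
      CFC.sqrt (1 - Uᴴ * U) * X * CFC.sqrt (1 - Uᴴ * U) + Uᴴ * Y * U := by
  have hS : (CFC.sqrt (1 - Uᴴ * U))ᴴ = CFC.sqrt (1 - Uᴴ * U) :=
    (CFC.sqrt_nonneg _).isSelfAdjoint
  simp [halmosDilation, fromBlocks_conjTranspose, fromBlocks_multiply, hS, Matrix.mul_assoc]

theorem IsMatrixConcave.smul_add_conj_cfc_le_cfc_conj {ξ : ℝ → ℝ}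
    (hξ : IsMatrixConcave ℂ (n ⊕ m) ξ) (hU : (1 - Uᴴ * U).PosSemidef) {B : Matrix m m ℂ}
    (hB : B.PosSemidef) :
    ξ 0 • (1 - Uᴴ * U) + Uᴴ * cfc ξ B * U ≤ cfc ξ (Uᴴ * B * U) := by
  set W := halmosDilation U
  set R := blockReflection ℂ n m
  have hM : (fromBlocks (0 : Matrix n n ℂ) 0 0 B).PosSemidef := PosSemidef.zero.fromBlocks_zero hB
  set A := Wᴴ * fromBlocks (0 : Matrix n n ℂ) 0 0 B * W
  have hA : A.PosSemidef := hM.conjTranspose_mul_mul_same W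
  have hcfcA : cfc ξ A = Wᴴ * fromBlocks (ξ 0 • 1) 0 0 (cfc ξ B) * W := by
    rw [cfc_conjTranspose_mul_mul hM.1 (conjTranspose_halmosDilation_mul_self hU),
      cfc_fromBlocks_zero isHermitian_zero hB.1, cfc_apply_zero, Algebra.algebraMap_eq_smul_one]
  have hA₁₁ : A.toBlocks₁₁ = Uᴴ * B * U := by
    simpa using toBlocks₁₁_conjTranspose_halmosDilation_mul_fromBlocks_mul (U := U) 0 B
  have hmid := hξ hA.nonneg (hA.conjTranspose_mul_mul_same R).nonneg (l := 2⁻¹)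
    (by norm_num) (by norm_num)
  rw [cfc_conjTranspose_mul_mul hA.1 conjTranspose_blockReflection_mul_self,
    show (1 - 2⁻¹ : ℝ) = 2⁻¹ by norm_num, ← smul_add, ← smul_add,
    smul_add_conjTranspose_blockReflection_mul_mul,
    smul_add_conjTranspose_blockReflection_mul_mul, hA₁₁,
    cfc_fromBlocks_zero (D := A.toBlocks₂₂) (isHermitian_conjTranspose_mul_mul U hB.1)
      (hA.submatrix Sum.inr).1] at hmid
  have h₁₁ : (cfc ξ A).toBlocks₁₁ ≤ cfc ξ (Uᴴ * B * U) := by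
    simpa using toBlocks₁₁_mono hmid
  rwa [hcfcA, toBlocks₁₁_conjTranspose_halmosDilation_mul_fromBlocks_mul, Matrix.mul_smul,
    Matrix.mul_one, Matrix.smul_mul, CFC.sqrt_mul_sqrt_self _ hU.nonneg] at h₁₁

end HalmosDilation

end Matrix

/-- If `U : H → K` is a contraction, `B ≥ 0` self-adjoint on `K`, and `ξ` is operator
concave with `ξ(0) ≥ 0`, then `ξ(U*BU) ≥ U*ξ(B)U` in the Loewner order. -/
theorem cfc_conj_contraction_ge
    (h k : ℕ) (U : Matrix (Fin k) (Fin h) ℂ)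
    -- `‖U‖ ≤ 1`, i.e. `U*U ≤ I` :
    (hU : ((1 : Matrix (Fin h) (Fin h) ℂ) - Uᴴ * U).PosSemidef)
    (B : Matrix (Fin k) (Fin k) ℂ) (hB : B.PosSemidef)
    (ξ : ℝ → ℝ) (hξ0 : 0 ≤ ξ 0)
    -- operator concavity of `ξ` on positive semidefinite matrices:
    (hξop : ∀ (m : ℕ) (A B : Matrix (Fin m) (Fin m) ℂ)
      (hA : A.PosSemidef) (hB : B.PosSemidef) (l : ℝ), 0 ≤ l → l ≤ 1 →
      ∀ (hC : (l • A + (1 - l) • B).IsHermitian),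
        (hC.cfc ξ - (l • hA.1.cfc ξ + (1 - l) • hB.1.cfc ξ)).PosSemidef)
    (hUBU : (Uᴴ * B * U).IsHermitian) :
    (hUBU.cfc ξ - Uᴴ * hB.1.cfc ξ * U).PosSemidef := by
  have hξ : ∀ m, IsMatrixConcave ℂ (Fin m) ξ := fun m A B hA hB l hl0 hl1 => by
    have hC : (l • A + (1 - l) • B).IsHermitian :=
      ((hA.posSemidef.smul hl0).add (hB.posSemidef.smul (sub_nonneg.mpr hl1))).1
    have := hξop m A B hA.posSemidef hB.posSemidef l hl0 hl1 hC
    simp only [← IsHermitian.cfc_eq] at this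
    exact le_iff.mpr this
  have key := ((hξ (h + k)).of_equiv finSumFinEquiv).smul_add_conj_cfc_le_cfc_conj hU hB
  rw [← hUBU.cfc_eq, ← hB.1.cfc_eq]
  exact le_iff.mp ((le_add_of_nonneg_left (hU.smul hξ0).nonneg).trans key)
end

section
/- Averaging identity for the dilation: with U, B, 𝒰, 𝒱 as in the dilation construction, (1/2)·𝒰*·diag(0,B)·𝒰 + (1/2)·𝒱*·diag(0,B)·𝒱 = diag( U*BU , (I−UU*)^{1/2} B (I−UU*)^{1/2} ) as operators on H ⊕ K. -/
open Matrix
open scoped ComplexOrder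

/-
Conjugating `diag(0, B)` by a block matrix only sees its lower row `(U, T)`, giving the blocks
`U*BU, U*BT, T*BU, T*BT`. The lower rows of `𝒰` and `𝒱` are `(U, T)` and `(U, -T)` with
`T = (I - UU*)^{1/2}` Hermitian, so the off-diagonal blocks cancel in the average.
-/

/-- The positive semidefinite square root of a positive semidefinite matrix
(as defined in Mathlib of December 2024; since removed from Mathlib). -/
noncomputable def Matrix.PosSemidef.sqrt {n 𝕜 : Type*} [Fintype n] [RCLike 𝕜] [DecidableEq n]
    {A : Matrix n n 𝕜} (hA : A.PosSemidef) : Matrix n n 𝕜 :=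
  hA.1.eigenvectorUnitary.1 * diagonal ((↑) ∘ (√·) ∘ hA.1.eigenvalues) *
  (star hA.1.eigenvectorUnitary : Matrix n n 𝕜)

theorem Matrix.PosSemidef.sqrt_conjTranspose {n 𝕜 : Type*} [Fintype n] [RCLike 𝕜]
    [DecidableEq n] {A : Matrix n n 𝕜} (hA : A.PosSemidef) : hA.sqrtᴴ = hA.sqrt := by
  simp only [Matrix.PosSemidef.sqrt, conjTranspose_mul, star_eq_conjTranspose,
    conjTranspose_conjTranspose, diagonal_conjTranspose, Matrix.mul_assoc]
  congr 3
  funext i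
  simp

theorem Matrix.fromBlocks_conjTranspose_mul_fromBlocks_zero_mul {l m α : Type*}
    [Fintype l] [Fintype m] [Semiring α] [StarRing α]
    (S : Matrix l l α) (V : Matrix l m α) (U : Matrix m l α) (T B : Matrix m m α) :
    (fromBlocks S V U T)ᴴ * fromBlocks 0 0 0 B * fromBlocks S V U T =
      fromBlocks (Uᴴ * B * U) (Uᴴ * B * T) (Tᴴ * B * U) (Tᴴ * B * T) := by
  simp only [fromBlocks_conjTranspose, fromBlocks_multiply, Matrix.mul_zero, Matrix.zero_mul,
    zero_add, add_zero, Matrix.mul_assoc]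

theorem dilation_average_identity_general
    (h k : ℕ) (U : Matrix (Fin k) (Fin h) ℂ)
    (hU1 : ((1 : Matrix (Fin h) (Fin h) ℂ) - Uᴴ * U).PosSemidef)
    (hU2 : ((1 : Matrix (Fin k) (Fin k) ℂ) - U * Uᴴ).PosSemidef)
    (B : Matrix (Fin k) (Fin k) ℂ) :
    (1 / 2 : ℂ) • ((Matrix.fromBlocks hU1.sqrt (-Uᴴ) U hU2.sqrt)ᴴ *
        Matrix.fromBlocks 0 0 0 B * Matrix.fromBlocks hU1.sqrt (-Uᴴ) U hU2.sqrt) +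
      (1 / 2 : ℂ) • ((Matrix.fromBlocks hU1.sqrt Uᴴ U (-hU2.sqrt))ᴴ *
        Matrix.fromBlocks 0 0 0 B * Matrix.fromBlocks hU1.sqrt Uᴴ U (-hU2.sqrt)) =
      Matrix.fromBlocks (Uᴴ * B * U) 0 0 (hU2.sqrt * B * hU2.sqrt) := by
  simp only [fromBlocks_conjTranspose_mul_fromBlocks_zero_mul, conjTranspose_neg,
    hU2.sqrt_conjTranspose, Matrix.mul_neg, Matrix.neg_mul, neg_neg, fromBlocks_smul,
    fromBlocks_add, fromBlocks_inj]
  refine ⟨by module, by module, by module, by module⟩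

/-- Averaging identity for the dilation:
`(1/2)𝒰* diag(0,B) 𝒰 + (1/2)𝒱* diag(0,B) 𝒱 = diag(U*BU, (I−UU*)^{1/2} B (I−UU*)^{1/2})`. -/
theorem dilation_average_identity
    (h k : ℕ) (U : Matrix (Fin k) (Fin h) ℂ)
    (hU1 : ((1 : Matrix (Fin h) (Fin h) ℂ) - Uᴴ * U).PosSemidef)
    (hU2 : ((1 : Matrix (Fin k) (Fin k) ℂ) - U * Uᴴ).PosSemidef)
    (B : Matrix (Fin k) (Fin k) ℂ) (hB : B.IsHermitian) :
    (1 / 2 : ℂ) • ((Matrix.fromBlocks hU1.sqrt (-Uᴴ) U hU2.sqrt)ᴴ *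
        Matrix.fromBlocks 0 0 0 B * Matrix.fromBlocks hU1.sqrt (-Uᴴ) U hU2.sqrt) +
      (1 / 2 : ℂ) • ((Matrix.fromBlocks hU1.sqrt Uᴴ U (-hU2.sqrt))ᴴ *
        Matrix.fromBlocks 0 0 0 B * Matrix.fromBlocks hU1.sqrt Uᴴ U (-hU2.sqrt)) =
      Matrix.fromBlocks (Uᴴ * B * U) 0 0 (hU2.sqrt * B * hU2.sqrt) :=
  dilation_average_identity_general h k U hU1 hU2 B
end
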